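/- arXiv:1906.02109 — 3 statements merged into one kernel-verified Lean document; each statement's English description precedes it below -/
import Mathlib

section
/- Let X be a germ at 0 ∈ ℂⁿ of holomorphic vector field, not identically zero, and let r ≥ 1. Suppose Y₁, …, Y_r are vector fields commuting with X that are generically linearly independent (in every neighborhood of 0 there is a point z where the vectors Y₁(z), …, Y_r(z) are linearly independent over ℂ). Suppose moreover that every vector field Z commuting with X satisfies: for all z near 0 the vectors Z(z), Y₁(z), …, Y_r(z) are ℂ-linearly dependent (so r(X) = r), and that there exists a vector field Y commuting with X which is not equal, as a germ, to any ℂ-linear combination of Y₁, …, Y_r (so d(X) > r). Then X admits a non-constant meromorphic first integral. -/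
open Filter Topology

noncomputable section

/-- Lie bracket of two (germs of) holomorphic vector fields:
`[X,Y](z) = DY(z)(X(z)) - DX(z)(Y(z))`. -/
def lieBr {E : Type*} [NormedAddCommGroup E] [NormedSpace ℂ E] (X Y : E → E) : E → E :=
  fun z => fderiv ℂ Y z (X z) - fderiv ℂ X z (Y z)

/-- `Y` commutes with `X` as germs at `0`: `[X,Y] = 0` near `0`. -/
def Commutes {E : Type*} [NormedAddCommGroup E] [NormedSpace ℂ E] (X Y : E → E) : Prop :=
  ∀ᶠ z in 𝓝 0, lieBr X Y z = 0

/-! Choose an `r × r` minor `h` of the matrix with columns `Y₁, …, Y_r` that does not vanish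
identically, and let `g_j` be the same minor with the `j`-th column replaced by a commuting field
`Z` that is not a constant combination of the `Yᵢ`. By Cramer's rule `h Z = ∑ g_j Y_j` where
`h ≠ 0`, hence everywhere. Differentiating along `X`, the commutation relations make the terms
in `DX` cancel, leaving `X(h) Z = ∑ X(g_j) Y_j`; comparing coefficients with the first identity
where the `Yᵢ` are independent gives `h X(g_j) = g_j X(h)`. If every `g_j / h` were constant,
`Z` would be a constant combination of the `Yᵢ`. -/

section Minor

variable {K ι κ : Type*} [Fintype κ] [DecidableEq κ]

def minor [CommRing K] (v : κ → ι → K) (ρ : κ → ι) : K :=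
  (Matrix.of fun i j => v j (ρ i)).det

theorem linearIndependent_of_minor_ne_zero [Field K] {v : κ → ι → K} {ρ : κ → ι}
    (h : minor v ρ ≠ 0) : LinearIndependent K v :=
  .of_comp (LinearMap.funLeft K K ρ) <|
    Matrix.linearIndependent_cols_iff_isUnit.2 ((Matrix.isUnit_iff_isUnit_det _).2 h.isUnit)

theorem LinearIndependent.exists_minor_ne_zero [Field K] [Finite ι] {v : κ → ι → K}
    (hv : LinearIndependent K v) : ∃ ρ : κ → ι, minor v ρ ≠ 0 := by
  set A : Matrix ι κ K := Matrix.of fun i j => v j i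
  have hrows : Submodule.span K (Set.range A.row) = ⊤ := by
    refine Submodule.eq_top_of_finrank_eq ?_
    rw [← A.rank_eq_finrank_span_row, A.rank_eq_finrank_span_cols,
      Module.finrank_fintype_fun_eq_card]
    exact finrank_span_eq_card hv
  obtain ⟨κ', a, -, hspan, hli⟩ := exists_linearIndependent' K A.row
  let b := Module.Basis.mk hli (by rw [hspan, hrows])
  let e : κ ≃ κ' := (Pi.basisFun K κ).indexEquiv b
  refine ⟨a ∘ e, fun h0 => ?_⟩
  have hli' : LinearIndependent K (Matrix.of fun i j => v j ((a ∘ e) i)).row :=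
    hli.comp e e.injective
  exact (Matrix.isUnit_iff_isUnit_det _).1
    (Matrix.linearIndependent_rows_iff_isUnit.1 hli') |>.ne_zero h0

theorem minor_smul_eq_sum_update [CommRing K] {v : κ → ι → K} {w : ι → K}
    (hw : w ∈ Submodule.span K (Set.range v)) (ρ : κ → ι) :
    minor v ρ • w = ∑ j, minor (Function.update v j w) ρ • v j := by
  obtain ⟨a, rfl⟩ := (Submodule.mem_span_range_iff_exists_fun K).1 hw
  set M : Matrix κ κ K := Matrix.of fun i j => v j (ρ i)
  have hcramer : ∀ j, minor (Function.update v j (∑ k, a k • v k)) ρ = minor v ρ * a j := by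
    intro j
    have hMa : M.mulVec a = fun i => (∑ k, a k • v k) (ρ i) := by
      ext i; simp [M, Matrix.mulVec, dotProduct, mul_comm]
    have hupd : (Matrix.of fun i j' => Function.update v j (∑ k, a k • v k) j' (ρ i)) =
        M.updateCol j (fun i => (∑ k, a k • v k) (ρ i)) := by
      ext i j'; by_cases hj : j' = j <;> simp [Function.update_apply, hj, M]
    rw [minor, hupd, ← Matrix.cramer_apply, ← hMa, Matrix.cramer_eq_adjugate_mulVec,
      Matrix.mulVec_mulVec, Matrix.adjugate_mul, Matrix.smul_mulVec, Matrix.one_mulVec]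
    rfl
  simp only [hcramer, Finset.smul_sum, smul_smul]

end Minor

theorem exists_minor_not_eventuallyEq_zero {T K ι κ : Type*} [TopologicalSpace T] [Field K]
    [Finite ι] [Fintype κ] [DecidableEq κ] {v : T → κ → ι → K} {x : T}
    (hv : ∀ U ∈ 𝓝 x, ∃ z ∈ U, LinearIndependent K (v z)) :
    ∃ ρ : κ → ι, ¬ (fun z => minor (v z) ρ) =ᶠ[𝓝 x] 0 := by
  by_contra! hzero
  obtain ⟨z, hz, hli⟩ := hv _ (eventually_all.2 hzero)
  obtain ⟨ρ, hρ⟩ := hli.exists_minor_ne_zero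
  exact hρ (hz ρ)

theorem LinearIndependent.mul_eq_mul_of_smul_eq_sum {R M κ : Type*} [CommRing R] [AddCommGroup M]
    [Module R M] [Fintype κ] {v : κ → M} (hv : LinearIndependent R v) {w : M} {a a' : R}
    {b b' : κ → R} (h : a • w = ∑ j, b j • v j) (h' : a' • w = ∑ j, b' j • v j) (j : κ) :
    a * b' j = b j * a' := by
  have hsum : ∑ j, (a * b' j - b j * a') • v j = 0 := by
    simp only [sub_smul, Finset.sum_sub_distrib, mul_smul, ← Finset.smul_sum, ← h, ← h',
      smul_comm a a', mul_comm _ a', sub_self]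
  exact sub_eq_zero.1 (Fintype.linearIndependent_iff.1 hv _ hsum j)

section Analytic

variable {E F : Type*} [NormedAddCommGroup E] [NormedSpace ℂ E] [NormedAddCommGroup F]
  [NormedSpace ℂ F]

theorem AnalyticAt.fderiv_apply [CompleteSpace F] {f : E → F} {X : E → E} {x : E}
    (hf : AnalyticAt ℂ f x) (hX : AnalyticAt ℂ X x) :
    AnalyticAt ℂ (fun z => fderiv ℂ f z (X z)) x :=
  ((ContinuousLinearMap.id ℂ (E →L[ℂ] F)).analyticAt_bilinear _).comp₂ hf.fderiv hX

theorem AnalyticAt.matrix_det {κ : Type*} [Fintype κ] [DecidableEq κ] {A : E → Matrix κ κ ℂ}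
    {x : E} (hA : ∀ i j, AnalyticAt ℂ (fun z => A z i j) x) :
    AnalyticAt ℂ (fun z => (A z).det) x := by
  simp only [Matrix.det_apply, Units.smul_def, zsmul_eq_mul]
  exact Finset.analyticAt_fun_sum _ fun σ _ =>
    analyticAt_const.mul (Finset.analyticAt_fun_prod _ fun i _ => hA (σ i) i)

theorem AnalyticAt.minor {ι κ : Type*} [Fintype κ] [DecidableEq κ] {v : E → κ → ι → ℂ} {x : E}
    (hv : ∀ j i, AnalyticAt ℂ (fun z => v z j i) x) (ρ : κ → ι) :
    AnalyticAt ℂ (fun z => minor (v z) ρ) x :=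
  AnalyticAt.matrix_det fun i j => hv j (ρ i)

/-- Being continuous and not locally zero, `h` is nonzero on an open subset of every small ball
around `x₀`; `f = g` there, and the identity theorem spreads this over the ball. -/
theorem AnalyticAt.eventuallyEq_of_eq_off_zeros [CompleteSpace F] {f g : E → F} {h : E → ℂ} {x₀ : E}
    (hf : AnalyticAt ℂ f x₀) (hg : AnalyticAt ℂ g x₀) (hh : ∀ᶠ z in 𝓝 x₀, ContinuousAt h z)
    (hne : ¬ h =ᶠ[𝓝 x₀] 0) (hfg : ∀ᶠ z in 𝓝 x₀, h z ≠ 0 → f z = g z) : f =ᶠ[𝓝 x₀] g := by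
  obtain ⟨ε, hε, hball⟩ := Metric.eventually_nhds_iff_ball.1 <|
    hf.eventually_analyticAt.and <| hg.eventually_analyticAt.and <| hh.and hfg
  have hB : Metric.ball x₀ ε ∈ 𝓝 x₀ := Metric.ball_mem_nhds x₀ hε
  obtain ⟨z₁, hz₁, hhz₁⟩ : ∃ z₁ ∈ Metric.ball x₀ ε, h z₁ ≠ 0 := by
    by_contra! hzero
    exact hne (Filter.eventually_of_mem hB hzero)
  have hfg₁ : f =ᶠ[𝓝 z₁] g := by
    filter_upwards [Metric.isOpen_ball.mem_nhds hz₁, (hball z₁ hz₁).2.2.1.eventually_ne hhz₁]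
      with z hz hhz
    exact (hball z hz).2.2.2 hhz
  refine Set.EqOn.eventuallyEq_of_mem ?_ hB
  exact AnalyticOnNhd.eqOn_of_preconnected_of_eventuallyEq (fun z hz => (hball z hz).1)
    (fun z hz => (hball z hz).2.1) (convex_ball x₀ ε).isPreconnected hz₁ hfg₁

theorem fderiv_smul_eq_sum_of_lieBr_eq_zero {κ : Type*} [Fintype κ] {X Z : E → E}
    {Y : κ → E → E} {h : E → ℂ} {g : κ → E → ℂ} {z : E}
    (hh : DifferentiableAt ℂ h z) (hg : ∀ j, DifferentiableAt ℂ (g j) z)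
    (hZ : DifferentiableAt ℂ Z z) (hY : ∀ j, DifferentiableAt ℂ (Y j) z)
    (hZc : lieBr X Z z = 0) (hYc : ∀ j, lieBr X (Y j) z = 0)
    (hrel : (fun w => h w • Z w) =ᶠ[𝓝 z] fun w => ∑ j, g j w • Y j w) :
    fderiv ℂ h z (X z) • Z z = ∑ j, fderiv ℂ (g j) z (X z) • Y j z := by
  have hD := DFunLike.congr_fun (hrel.fderiv_eq (𝕜 := ℂ)) (X z)
  rw [fderiv_fun_smul hh hZ, fderiv_fun_sum (A := fun j w => g j w • Y j w)
    fun j _ => (hg j).smul (hY j)] at hD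
  simp only [fun j => fderiv_fun_smul (hg j) (hY j)] at hD
  simp only [add_apply, smul_apply, ContinuousLinearMap.smulRight_apply, FunLike.coe_sum,
    Finset.sum_apply, Finset.sum_add_distrib] at hD
  have hXrel : h z • fderiv ℂ X z (Z z) = ∑ j, g j z • fderiv ℂ X z (Y j z) := by
    simpa only [map_smul, map_sum] using congrArg (fderiv ℂ X z) hrel.eq_of_nhds
  have hYc' : ∀ j, fderiv ℂ (Y j) z (X z) = fderiv ℂ X z (Y j z) := fun j => sub_eq_zero.1 (hYc j)
  rw [sub_eq_zero.1 hZc, hXrel] at hD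
  simp only [hYc'] at hD
  exact add_left_cancel hD

theorem AnalyticAt.exists_not_eventuallyEq_const_mul [CompleteSpace F] {κ : Type*} [Fintype κ]
    {Z : E → F} {Y : κ → E → F} {h : E → ℂ} {g : κ → E → ℂ} {x₀ : E}
    (hZ : AnalyticAt ℂ Z x₀) (hY : ∀ j, AnalyticAt ℂ (Y j) x₀) (hh : AnalyticAt ℂ h x₀)
    (hne : ¬ h =ᶠ[𝓝 x₀] 0) (hrel : (fun z => h z • Z z) =ᶠ[𝓝 x₀] fun z => ∑ j, g j z • Y j z)
    (hZY : ∀ c : κ → ℂ, ¬ Z =ᶠ[𝓝 x₀] fun z => ∑ j, c j • Y j z) :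
    ∃ j, ∀ c : ℂ, ¬ g j =ᶠ[𝓝 x₀] fun z => c * h z := by
  by_contra! hconst
  choose c hc using hconst
  refine hZY c (hZ.eventuallyEq_of_eq_off_zeros
    (Finset.analyticAt_fun_sum _ fun j _ => (hY j).const_smul) hh.eventually_continuousAt hne ?_)
  filter_upwards [hrel, eventually_all.2 hc] with z hrelz hcz hz
  refine smul_right_injective F hz ?_
  simp only [hrelz, hcz, Finset.smul_sum, smul_smul, mul_comm]

theorem eventually_mul_fderiv_eq_of_smul_eq_sum [CompleteSpace E] {κ : Type*} [Fintype κ]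
    {X Z : E → E} {Y : κ → E → E} {h : E → ℂ} {g : κ → E → ℂ}
    (hX : AnalyticAt ℂ X 0) (hZ : AnalyticAt ℂ Z 0) (hY : ∀ j, AnalyticAt ℂ (Y j) 0)
    (hh : AnalyticAt ℂ h 0) (hne : ¬ h =ᶠ[𝓝 0] 0) (hg : ∀ j, AnalyticAt ℂ (g j) 0)
    (hZc : Commutes X Z) (hYc : ∀ j, Commutes X (Y j))
    (hrel : (fun z => h z • Z z) =ᶠ[𝓝 0] fun z => ∑ j, g j z • Y j z)
    (hli : ∀ᶠ z in 𝓝 0, h z ≠ 0 → LinearIndependent ℂ fun j => Y j z) (j : κ) :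
    ∀ᶠ z in 𝓝 0, h z * fderiv ℂ (g j) z (X z) = g j z * fderiv ℂ h z (X z) := by
  have hderiv : ∀ᶠ z in 𝓝 0,
      fderiv ℂ h z (X z) • Z z = ∑ j, fderiv ℂ (g j) z (X z) • Y j z := by
    filter_upwards [hh.eventually_analyticAt,
      eventually_all.2 fun j => (hg j).eventually_analyticAt, hZ.eventually_analyticAt,
      eventually_all.2 fun j => (hY j).eventually_analyticAt, hZc, eventually_all.2 hYc,
      hrel.eventuallyEq_nhds] with z hhz hgz hZz hYz hZcz hYcz hrelz
    exact fderiv_smul_eq_sum_of_lieBr_eq_zero hhz.differentiableAt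
      (fun j => (hgz j).differentiableAt) hZz.differentiableAt (fun j => (hYz j).differentiableAt)
      hZcz hYcz hrelz
  refine (hh.mul ((hg j).fderiv_apply hX)).eventuallyEq_of_eq_off_zeros
    ((hg j).mul (hh.fderiv_apply hX)) hh.eventually_continuousAt hne ?_
  filter_upwards [hrel, hderiv, hli] with z hrelz hderivz hliz hz
  exact (hliz hz).mul_eq_mul_of_smul_eq_sum hrelz hderivz j

end Analytic

theorem stmt1_general (n r : ℕ)
    (X : (Fin n → ℂ) → (Fin n → ℂ)) (hX : AnalyticAt ℂ X 0)
    (Y : Fin r → ((Fin n → ℂ) → (Fin n → ℂ)))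
    (hYa : ∀ i, AnalyticAt ℂ (Y i) 0)
    (hYc : ∀ i, Commutes X (Y i))
    -- `Y₁, …, Y_r` are generically linearly independent
    (hgli : ∀ U ∈ 𝓝 (0 : Fin n → ℂ), ∃ z ∈ U, LinearIndependent ℂ (fun i => Y i z))
    -- `r(X) = r`: any further commuting vector field is everywhere dependent with the `Yᵢ`
    (hmax : ∀ Z : (Fin n → ℂ) → (Fin n → ℂ), AnalyticAt ℂ Z 0 → Commutes X Z →
      ∀ᶠ z in 𝓝 (0 : Fin n → ℂ),
        ¬ LinearIndependent ℂ (Fin.cons (Z z) (fun i => Y i z) : Fin (r + 1) → Fin n → ℂ))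
    -- `d(X) > r`: some commuting vector field is not a `ℂ`-linear combination of the `Yᵢ`
    (hbig : ∃ Z : (Fin n → ℂ) → (Fin n → ℂ), AnalyticAt ℂ Z 0 ∧ Commutes X Z ∧
      ∀ c : Fin r → ℂ, ¬ (Z =ᶠ[𝓝 0] fun z => ∑ i, c i • Y i z)) :
    ∃ g h : (Fin n → ℂ) → ℂ, AnalyticAt ℂ g 0 ∧ AnalyticAt ℂ h 0 ∧
      ¬ (h =ᶠ[𝓝 0] fun _ => 0) ∧
      (∀ᶠ z in 𝓝 0, h z * fderiv ℂ g z (X z) = g z * fderiv ℂ h z (X z)) ∧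
      ∀ c : ℂ, ¬ (g =ᶠ[𝓝 0] fun z => c * h z) := by
  obtain ⟨Z, hZa, hZc, hZY⟩ := hbig
  obtain ⟨ρ, hρ⟩ := exists_minor_not_eventuallyEq_zero hgli
  set h := fun z => minor (fun i => Y i z) ρ
  set g := fun j z => minor (Function.update (fun i => Y i z) j (Z z)) ρ
  have hha : AnalyticAt ℂ h 0 := AnalyticAt.minor (fun j => analyticAt_pi_iff.1 (hYa j)) ρ
  have hga : ∀ j, AnalyticAt ℂ (g j) 0 := fun j => AnalyticAt.minor (fun i => by
    by_cases hij : i = j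
    · simpa [hij] using analyticAt_pi_iff.1 hZa
    · simpa [hij] using analyticAt_pi_iff.1 (hYa i)) ρ
  have hli : ∀ z, h z ≠ 0 → LinearIndependent ℂ fun i => Y i z :=
    fun z => linearIndependent_of_minor_ne_zero
  have hrel : (fun z => h z • Z z) =ᶠ[𝓝 0] fun z => ∑ j, g j z • Y j z := by
    refine (hha.smul hZa).eventuallyEq_of_eq_off_zeros
      (Finset.analyticAt_fun_sum _ fun j _ => (hga j).smul (hYa j))
      hha.eventually_continuousAt hρ ?_
    filter_upwards [hmax Z hZa hZc] with z hdep hz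
    refine minor_smul_eq_sum_update (not_not.1 fun hZz => hdep ?_) ρ
    exact linearIndependent_finCons.2 ⟨hli z hz, hZz⟩
  obtain ⟨j, hj⟩ := hZa.exists_not_eventuallyEq_const_mul hYa hha hρ hrel hZY
  exact ⟨g j, h, hga j, hha, hρ, eventually_mul_fderiv_eq_of_smul_eq_sum hX hZa hYa hha hρ hga hZc
    hYc hrel (.of_forall hli) j, hj⟩

/-- If `r(X) = r < d(X)` then `X` admits a non-constant meromorphic first integral. -/
theorem stmt1 (n r : ℕ) (hr : 1 ≤ r)
    (X : (Fin n → ℂ) → (Fin n → ℂ)) (hX : AnalyticAt ℂ X 0)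
    (hX0 : ¬ (X =ᶠ[𝓝 0] fun _ => 0))
    (Y : Fin r → ((Fin n → ℂ) → (Fin n → ℂ)))
    (hYa : ∀ i, AnalyticAt ℂ (Y i) 0)
    (hYc : ∀ i, Commutes X (Y i))
    -- `Y₁, …, Y_r` are generically linearly independent
    (hgli : ∀ U ∈ 𝓝 (0 : Fin n → ℂ), ∃ z ∈ U, LinearIndependent ℂ (fun i => Y i z))
    -- `r(X) = r`: any further commuting vector field is everywhere dependent with the `Yᵢ`
    (hmax : ∀ Z : (Fin n → ℂ) → (Fin n → ℂ), AnalyticAt ℂ Z 0 → Commutes X Z →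
      ∀ᶠ z in 𝓝 (0 : Fin n → ℂ),
        ¬ LinearIndependent ℂ (Fin.cons (Z z) (fun i => Y i z) : Fin (r + 1) → Fin n → ℂ))
    -- `d(X) > r`: some commuting vector field is not a `ℂ`-linear combination of the `Yᵢ`
    (hbig : ∃ Z : (Fin n → ℂ) → (Fin n → ℂ), AnalyticAt ℂ Z 0 ∧ Commutes X Z ∧
      ∀ c : Fin r → ℂ, ¬ (Z =ᶠ[𝓝 0] fun z => ∑ i, c i • Y i z)) :
    ∃ g h : (Fin n → ℂ) → ℂ, AnalyticAt ℂ g 0 ∧ AnalyticAt ℂ h 0 ∧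
      ¬ (h =ᶠ[𝓝 0] fun _ => 0) ∧
      (∀ᶠ z in 𝓝 0, h z * fderiv ℂ g z (X z) = g z * fderiv ℂ h z (X z)) ∧
      ∀ c : ℂ, ¬ (g =ᶠ[𝓝 0] fun z => c * h z) :=
  stmt1_general n r X hX Y hYa hYc hgli hmax hbig
end
end

section
/- Let L be a set of germs at 0 ∈ ℂⁿ of holomorphic vector fields that is closed under ℂ-linear combinations and under the Lie bracket, and finite-dimensional over ℂ: there exist Z₁, …, Z_m ∈ L such that every element of L equals, as a germ, a ℂ-linear combination of Z₁, …, Z_m. Suppose every Y ∈ L vanishes to order at least 2 at 0, i.e. Y(0) = 0 and DY(0) = 0. Then L is a nilpotent Lie algebra: there exists k ∈ ℕ such that for all W, Z₁, …, Z_k ∈ L the iterated bracket [Z₁, [Z₂, …, [Z_k, W]…]] vanishes identically near 0. -/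
/-!
Write "`f` vanishes to order `k`" for `f =O[𝓝 0] fun z => ‖z‖ ^ k`. For an analytic `f` this
holds iff the first `k` terms of its power series vanish, so differentiation lowers the order by
one, and the bracket of fields vanishing to orders `a + 1` and `b + 1` vanishes to order
`a + b + 1`. Hence a `k`-fold iterated bracket of elements of `L` vanishes to order `k + 2`.
On the other hand, in the finite-dimensional span of `Z₁, …, Z_m` the subspaces of germs vanishing
to order `k` decrease with `k` and therefore stabilize from some `k₀` on; a germ vanishing to order
`k₀` vanishes to every order, so its power series is zero and so is the germ. Thus all iterated
brackets of length `k₀` vanish.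
-/

open Filter Topology

noncomputable section

open Asymptotics FormalMultilinearSeries

section VanishingOrder

variable {𝕜 E F : Type*} [NontriviallyNormedField 𝕜] [NormedAddCommGroup E] [NormedSpace 𝕜 E]
  [NormedAddCommGroup F] [NormedSpace 𝕜 F]

lemma isBigO_norm_pow_of_le {a b : ℕ} (h : a ≤ b) :
    (fun z : E => ‖z‖ ^ b) =O[𝓝 0] fun z => ‖z‖ ^ a := by
  refine IsBigO.of_bound 1 ?_
  filter_upwards [Metric.ball_mem_nhds (0 : E) one_pos] with z hz
  rw [mem_ball_zero_iff] at hz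
  simpa using pow_le_pow_of_le_one (norm_nonneg z) hz.le h

lemma partialSum_eq_zero_of_forall_lt {p : FormalMultilinearSeries 𝕜 E F} {k : ℕ}
    (h : ∀ j < k, ∀ y, (p j fun _ => y) = 0) (y : E) : p.partialSum k y = 0 :=
  Finset.sum_eq_zero fun j hj => h j (Finset.mem_range.mp hj) y

theorem HasFPowerSeriesAt.isBigO_norm_pow_iff {f : E → F} {p : FormalMultilinearSeries 𝕜 E F}
    (hp : HasFPowerSeriesAt f p 0) {k : ℕ} :
    f =O[𝓝 0] (fun z => ‖z‖ ^ k) ↔ ∀ j < k, ∀ y, (p j fun _ => y) = 0 := by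
  refine ⟨fun hf => ?_, fun h => ?_⟩
  · induction k with
    | zero => simp
    | succ k ih =>
      have hlow := ih (hf.trans (isBigO_norm_pow_of_le k.le_succ))
      have hdiag : (fun y => p k fun _ => y) =
          fun y => f y - (f (0 + y) - p.partialSum (k + 1) y) := by
        funext y
        have hlow_sum := partialSum_eq_zero_of_forall_lt hlow y
        rw [partialSum] at hlow_sum
        simp [partialSum, Finset.sum_range_succ, hlow_sum]
      intro j hj
      rcases Nat.lt_succ_iff_lt_or_eq.mp hj with hj | rfl
      · exact hlow j hj
      · refine IsBigO.continuousMultilinearMap_apply_eq_zero ?_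
        exact hdiag ▸ hf.sub (hp.isBigO_sub_partialSum_pow (j + 1))
  · simpa [partialSum_eq_zero_of_forall_lt h] using hp.isBigO_sub_partialSum_pow k

theorem AnalyticAt.eventuallyEq_zero_of_forall_isBigO {f : E → F} (hf : AnalyticAt 𝕜 f 0)
    (h : ∀ k : ℕ, f =O[𝓝 0] fun z => ‖z‖ ^ k) : f =ᶠ[𝓝 0] 0 := by
  obtain ⟨p, hp⟩ := hf
  have hdiag : ∀ j y, (p j fun _ => y) = 0 := fun j =>
    hp.isBigO_norm_pow_iff.mp (h (j + 1)) j j.lt_succ_self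
  filter_upwards [hp.eventually_hasSum] with y hy
  simp only [hdiag, zero_add] at hy
  exact hy.unique hasSum_zero

/-- `derivSeries` sees whole coefficients, not only their diagonals, hence this truncation. -/
theorem HasFPowerSeriesAt.exists_forall_lt_eq_zero {f : E → F}
    {p : FormalMultilinearSeries 𝕜 E F} (hp : HasFPowerSeriesAt f p 0) {k : ℕ}
    (h : ∀ j < k, ∀ y, (p j fun _ => y) = 0) :
    ∃ q : FormalMultilinearSeries 𝕜 E F, HasFPowerSeriesAt f q 0 ∧ ∀ j < k, q j = 0 := by
  obtain ⟨r, hr⟩ := hp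
  let q : FormalMultilinearSeries 𝕜 E F := fun j => if j < k then 0 else p j
  have hq_le : ∀ j, ‖q j‖ ≤ ‖p j‖ := fun j => by
    by_cases hj : j < k <;> simp [q, hj]
  refine ⟨q, ⟨r, ⟨hr.r_le.trans (radius_le_of_le hq_le), hr.r_pos, fun {y} hy => ?_⟩⟩,
    fun j hj => if_pos hj⟩
  have hdiag : ∀ j, (q j fun _ => y) = p j fun _ => y := fun j => by
    by_cases hj : j < k
    · simp only [q, if_pos hj, h j hj, _root_.zero_apply]
    · simp only [q, if_neg hj]
  simpa only [hdiag] using hr.hasSum hy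

theorem AnalyticAt.fderiv_isBigO_norm_pow [CompleteSpace F] {f : E → F} (hf : AnalyticAt 𝕜 f 0)
    {k : ℕ} (h : f =O[𝓝 0] fun z => ‖z‖ ^ (k + 1)) :
    fderiv 𝕜 f =O[𝓝 0] fun z => ‖z‖ ^ k := by
  obtain ⟨p, hp⟩ := hf
  obtain ⟨q, ⟨r, hq⟩, hq_zero⟩ := hp.exists_forall_lt_eq_zero (hp.isBigO_norm_pow_iff.mp h)
  refine hq.fderiv.hasFPowerSeriesAt.isBigO_norm_pow_iff.mpr fun j hj y => ?_
  have hterm : q.changeOriginSeries 1 j = 0 := Finset.sum_eq_zero fun s _ => by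
    simp only [changeOriginSeriesTerm, hq_zero (1 + j) (by omega)]
    exact (ContinuousMultilinearMap.curryFinFinset 𝕜 E F _ _).map_zero
  simp [derivSeries, ContinuousLinearMap.compFormalMultilinearSeries_apply, hterm]

theorem AnalyticAt.isBigO_norm_sq_of_fderiv_eq_zero {f : E → F} (hf : AnalyticAt 𝕜 f 0)
    (h₀ : f 0 = 0) (h₁ : fderiv 𝕜 f 0 = 0) : f =O[𝓝 0] fun z => ‖z‖ ^ 2 := by
  obtain ⟨p, hp⟩ := hf
  refine hp.isBigO_norm_pow_iff.mpr fun j hj y => ?_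
  interval_cases j
  · simpa [h₀] using hp.coeff_zero fun _ => y
  · have hp₁ : (p 1 fun _ => y) = fderiv 𝕜 f 0 y := by
      rw [hp.fderiv_eq, continuousMultilinearCurryFin1_apply]
      congr 1
    simpa [h₁] using hp₁

theorem AnalyticAt.isBigO_fderiv_apply [CompleteSpace F] {X : E → E} {Y : E → F}
    (hY : AnalyticAt 𝕜 Y 0) {a b : ℕ} (hX : X =O[𝓝 0] fun z => ‖z‖ ^ (a + 1))
    (hYo : Y =O[𝓝 0] fun z => ‖z‖ ^ (b + 1)) :
    (fun z => fderiv 𝕜 Y z (X z)) =O[𝓝 0] fun z => ‖z‖ ^ (a + b + 1) := by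
  have happly : (fun z => fderiv 𝕜 Y z (X z)) =O[𝓝 0] fun z => ‖fderiv 𝕜 Y z‖ * ‖X z‖ :=
    IsBigO.of_bound 1 (Eventually.of_forall fun z => by
      simpa using (fderiv 𝕜 Y z).le_opNorm (X z))
  have hprod := (hY.fderiv_isBigO_norm_pow hYo).norm_left.mul hX.norm_left
  refine happly.trans (hprod.congr_right fun z => ?_)
  ring

end VanishingOrder

section FiniteSpan

variable {𝕜 E F : Type*} [NontriviallyNormedField 𝕜] [NormedAddCommGroup E] [NormedSpace 𝕜 E]
  [NormedAddCommGroup F] [NormedSpace 𝕜 F]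

def isBigOSubmodule {α : Type*} (l : Filter α) (g : α → ℝ) : Submodule 𝕜 (α → F) where
  carrier := {f | f =O[l] g}
  add_mem' := IsBigO.add
  zero_mem' := isBigO_zero g l
  smul_mem' c _ hf := hf.const_smul_left c

theorem exists_eventuallyEq_zero_of_isBigO_norm_pow {ι : Type*} [Fintype ι] (B : ι → E → F)
    (hB : ∀ i, AnalyticAt 𝕜 (B i) 0) :
    ∃ k : ℕ, ∀ c : ι → 𝕜, ((fun z => ∑ i, c i • B i z) =O[𝓝 0] fun z => ‖z‖ ^ k) →
      (fun z => ∑ i, c i • B i z) =ᶠ[𝓝 0] 0 := by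
  let N : ℕ → Submodule 𝕜 (ι → 𝕜) := fun k =>
    (isBigOSubmodule (𝓝 0) fun z : E => ‖z‖ ^ k).comap (Fintype.linearCombination 𝕜 B)
  have hmem : ∀ k c, c ∈ N k ↔ (fun z => ∑ i, c i • B i z) =O[𝓝 0] fun z => ‖z‖ ^ k := by
    intro k c
    simp [N, isBigOSubmodule, Fintype.linearCombination_apply, Finset.sum_fn]
  have hN : Antitone N := fun a b hab c hc =>
    (hmem a c).mpr (((hmem b c).mp hc).trans (isBigO_norm_pow_of_le hab))
  -- a decreasing chain of subspaces of a finite-dimensional space stabilizes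
  obtain ⟨k, hk⟩ := WellFoundedLT.antitone_chain_condition hN
  refine ⟨k, fun c hc => ?_⟩
  have hall : ∀ j, c ∈ N j := fun j => by
    rcases le_total j k with hjk | hkj
    · exact hN hjk ((hmem k c).mpr hc)
    · exact hk j hkj ▸ (hmem k c).mpr hc
  have hsum : AnalyticAt 𝕜 (fun z => ∑ i, c i • B i z) 0 := by
    fun_prop
  exact hsum.eventuallyEq_zero_of_forall_isBigO fun j => (hmem j c).mp (hall j)

end FiniteSpan

theorem List.foldr_mem {α : Type*} {S : Set α} {f : α → α → α} (hf : ∀ a ∈ S, ∀ b ∈ S, f a b ∈ S)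
    {l : List α} (hl : ∀ a ∈ l, a ∈ S) {b : α} (hb : b ∈ S) : l.foldr f b ∈ S :=
  l.foldrRecOn (motive := (· ∈ S)) f hb fun c hc a ha => hf a (hl a ha) c hc

section LieBracket

variable {E : Type*} [NormedAddCommGroup E] [NormedSpace ℂ E] [CompleteSpace E]

theorem isBigO_lieBr {X Y : E → E} (hX : AnalyticAt ℂ X 0) (hY : AnalyticAt ℂ Y 0) {a b : ℕ}
    (hXo : X =O[𝓝 0] fun z => ‖z‖ ^ (a + 1)) (hYo : Y =O[𝓝 0] fun z => ‖z‖ ^ (b + 1)) :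
    lieBr X Y =O[𝓝 0] fun z => ‖z‖ ^ (a + b + 1) :=
  (hY.isBigO_fderiv_apply hXo hYo).sub (add_comm b a ▸ hX.isBigO_fderiv_apply hYo hXo)

theorem isBigO_foldr_lieBr {L : Set (E → E)} (hLa : ∀ Y ∈ L, AnalyticAt ℂ Y 0)
    (hLbr : ∀ Y ∈ L, ∀ Z ∈ L, lieBr Y Z ∈ L) (hL : ∀ Y ∈ L, Y =O[𝓝 0] fun z => ‖z‖ ^ 2)
    {W : E → E} (hW : W ∈ L) {l : List (E → E)} (hl : ∀ Z ∈ l, Z ∈ L) :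
    l.foldr lieBr W =O[𝓝 0] fun z => ‖z‖ ^ (l.length + 2) := by
  induction l with
  | nil => exact hL W hW
  | cons Z l ih =>
    have hZ : Z ∈ L := hl Z List.mem_cons_self
    have hl' : ∀ Y ∈ l, Y ∈ L := fun Y hY => hl Y (List.mem_cons_of_mem Z hY)
    simpa [add_assoc, add_comm 1] using
      isBigO_lieBr (a := 1) (hLa Z hZ) (hLa _ (List.foldr_mem hLbr hl' hW)) (hL Z hZ) (ih hl')

end LieBracket

theorem stmt5_general (n : ℕ) (L : Set ((Fin n → ℂ) → (Fin n → ℂ)))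
    (hLa : ∀ Y ∈ L, AnalyticAt ℂ Y 0)
    -- closed under the Lie bracket
    (hLbr : ∀ Y ∈ L, ∀ Z ∈ L, lieBr Y Z ∈ L)
    -- finite-dimensional over `ℂ`
    (hfin : ∃ m : ℕ, ∃ B : Fin m → ((Fin n → ℂ) → (Fin n → ℂ)),
      (∀ i, B i ∈ L) ∧ ∀ Y ∈ L, ∃ c : Fin m → ℂ,
        Y =ᶠ[𝓝 0] fun z => ∑ i, c i • B i z)
    -- every element vanishes to order at least 2 at `0`
    (hord : ∀ Y ∈ L, Y 0 = 0 ∧ fderiv ℂ Y 0 = 0) :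
    ∃ k : ℕ, ∀ W ∈ L, ∀ l : List ((Fin n → ℂ) → (Fin n → ℂ)),
      (∀ Z ∈ l, Z ∈ L) → l.length = k →
      (l.foldr lieBr W) =ᶠ[𝓝 0] fun _ => 0 := by
  obtain ⟨m, B, hBL, hrep⟩ := hfin
  have hL : ∀ Y ∈ L, Y =O[𝓝 0] fun z => ‖z‖ ^ 2 := fun Y hY =>
    (hLa Y hY).isBigO_norm_sq_of_fderiv_eq_zero (hord Y hY).1 (hord Y hY).2
  obtain ⟨k, hk⟩ := exists_eventuallyEq_zero_of_isBigO_norm_pow B fun i => hLa _ (hBL i)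
  refine ⟨k, fun W hW l hl hlen => ?_⟩
  obtain ⟨c, hc⟩ := hrep _ (List.foldr_mem hLbr hl hW)
  have hVo : l.foldr lieBr W =O[𝓝 0] fun z => ‖z‖ ^ k :=
    (isBigO_foldr_lieBr hLa hLbr hL hW hl).trans (isBigO_norm_pow_of_le (by omega))
  exact hc.trans (hk c (hVo.congr' hc EventuallyEq.rfl))

/-- A finite-dimensional Lie algebra of germs of holomorphic vector fields all vanishing to
order `≥ 2` at `0` is nilpotent. -/
theorem stmt5 (n : ℕ) (L : Set ((Fin n → ℂ) → (Fin n → ℂ)))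
    (hLa : ∀ Y ∈ L, AnalyticAt ℂ Y 0)
    -- closed under `ℂ`-linear combinations
    (hLlin : ∀ a b : ℂ, ∀ Y ∈ L, ∀ Z ∈ L, (fun z => a • Y z + b • Z z) ∈ L)
    -- closed under the Lie bracket
    (hLbr : ∀ Y ∈ L, ∀ Z ∈ L, lieBr Y Z ∈ L)
    -- finite-dimensional over `ℂ`
    (hfin : ∃ m : ℕ, ∃ B : Fin m → ((Fin n → ℂ) → (Fin n → ℂ)),
      (∀ i, B i ∈ L) ∧ ∀ Y ∈ L, ∃ c : Fin m → ℂ,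
        Y =ᶠ[𝓝 0] fun z => ∑ i, c i • B i z)
    -- every element vanishes to order at least 2 at `0`
    (hord : ∀ Y ∈ L, Y 0 = 0 ∧ fderiv ℂ Y 0 = 0) :
    ∃ k : ℕ, ∀ W ∈ L, ∀ l : List ((Fin n → ℂ) → (Fin n → ℂ)),
      (∀ Z ∈ l, Z ∈ L) → l.length = k →
      (l.foldr lieBr W) =ᶠ[𝓝 0] fun _ => 0 :=
  stmt5_general n L hLa hLbr hfin hord
end
end

section
/- Let p, q ≥ 1 be integers and S(x,y) = (p·x, q·y). Let X = (X₁, X₂) and Y = (Y₁, Y₂) be germs at 0 ∈ ℂ² of holomorphic vector fields, neither identically zero, with [S, X] = k·X, [S, Y] = ℓ·Y (k, ℓ ∈ ℤ) and [X, Y] = 0 near 0. Set h := p·x·X₂ − q·y·X₁ and f := X₁·Y₂ − X₂·Y₁, and assume h is not identically zero. Then h·X(f) = f·X(h) near 0 (the meromorphic function f/h is a first integral of X). Moreover, if ℓ ≠ 0 and ℓ ≠ k, then X admits a non-constant meromorphic first integral. -/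
open Filter Topology

noncomputable section

/-- `X` has an isolated singularity at `0`. -/
def IsolatedSing {E : Type*} [NormedAddCommGroup E] [NormedSpace ℂ E] (X : E → E) : Prop :=
  X 0 = 0 ∧ ∀ᶠ z in 𝓝 (0 : E), z ≠ 0 → X z ≠ 0

/-- The germ of `a` divides the germ of `b` at `0 ∈ ℂ²`. -/
def DivGerm (a b : ℂ × ℂ → ℂ) : Prop :=
  ∃ w : ℂ × ℂ → ℂ, AnalyticAt ℂ w 0 ∧ b =ᶠ[𝓝 0] fun z => w z * a z

/-- The germ of `h` at `0 ∈ ℂ²` (with `h 0 = 0`, `h ≢ 0`) is irreducible: in any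
factorization `h = u·v` near `0`, one of the factors is a unit. -/
def IrredGerm (h : ℂ × ℂ → ℂ) : Prop :=
  ∀ u v : ℂ × ℂ → ℂ, AnalyticAt ℂ u 0 → AnalyticAt ℂ v 0 →
    (h =ᶠ[𝓝 0] fun z => u z * v z) → u 0 ≠ 0 ∨ v 0 ≠ 0

/-- The quasi-radial vector field `S(x,y) = (p·x, q·y)`. -/
def Svf (p q : ℕ) : ℂ × ℂ → ℂ × ℂ := fun z => ((p : ℂ) * z.1, (q : ℂ) * z.2)

/-!
Write `h = det(S, X)`, `f = det(X, Y)`, `e = det(S, Y)` and `t = tr DX`. For vector fields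
`V, A, B` on `ℂ²`, `V(det(A, B)) = det([V, A], B) + det(A, [V, B]) + (tr DV) det(A, B)`. With the
bracket relations this gives `X(h) = t h`, `X(f) = t f`, `X(e) = t e - k f`, so `f/h` is a first
integral, and `S(h) = (k+p+q) h`, `S(f) = (k+l+p+q) f`, `S(e) = (l+p+q) e`. Eigenfunctions of `S`
with different eigenvalues are not proportional: so if `ℓ ≠ 0` and `f/h` is constant then `f ≡ 0`,
whence `e/h` is a first integral, which for `ℓ ≠ k` is constant only if `e ≡ 0`. But `f ≡ e ≡ 0`
forces `h·Y ≡ 0`, hence `Y ≡ 0`, since analytic germs form an integral domain.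
-/

theorem AnalyticAt.eventuallyEq_zero_of_mul_eventuallyEq_zero {E : Type*} [NormedAddCommGroup E]
    [NormedSpace ℂ E] {u v : E → ℂ} {x : E} (hu : AnalyticAt ℂ u x) (hv : AnalyticAt ℂ v x)
    (huv : ∀ᶠ z in 𝓝 x, u z * v z = 0) (hu0 : ¬ (u =ᶠ[𝓝 x] fun _ => 0)) :
    v =ᶠ[𝓝 x] fun _ => 0 := by
  obtain ⟨r, hr, hball⟩ := Metric.eventually_nhds_iff_ball.mp
    (hu.eventually_analyticAt.and (hv.eventually_analyticAt.and huv))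
  obtain ⟨z₁, hu₁, hz₁⟩ : ∃ z, u z ≠ 0 ∧ z ∈ Metric.ball x r :=
    ((not_eventually.mp hu0).and_eventually (Metric.ball_mem_nhds x hr)).exists
  have hv₁ : v =ᶠ[𝓝 z₁] 0 := by
    filter_upwards [(hball z₁ hz₁).1.continuousAt.eventually_ne hu₁,
      Metric.isOpen_ball.mem_nhds hz₁] with z hu hz
    exact (mul_eq_zero.mp (hball z hz).2.2).resolve_left hu
  have hv_ball : Set.EqOn v 0 (Metric.ball x r) :=
    AnalyticOnNhd.eqOn_zero_of_preconnected_of_eventuallyEq_zero (fun z hz => (hball z hz).2.1)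
      (convex_ball x r).isPreconnected hz₁ hv₁
  filter_upwards [Metric.ball_mem_nhds x hr] with z hz using hv_ball hz

section LieDeriv

variable {E : Type*} [NormedAddCommGroup E] [NormedSpace ℂ E]

def lieDeriv (V : E → E) (g : E → ℂ) (z : E) : ℂ := fderiv ℂ g z (V z)

theorem lieBr_self (V : E → E) (z : E) : lieBr V V z = 0 :=
  sub_self _

variable {V : E → E} {x : E}

theorem eq_zero_of_eventuallyEq_const_mul_of_lieDeriv {a b : E → ℂ} {α β c : ℂ}
    (hVa : ∀ᶠ z in 𝓝 x, lieDeriv V a z = α * a z) (hVb : ∀ᶠ z in 𝓝 x, lieDeriv V b z = β * b z)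
    (hαβ : α ≠ β) (ha0 : ¬ (a =ᶠ[𝓝 x] fun _ => 0)) (hba : b =ᶠ[𝓝 x] fun z => c * a z) :
    c = 0 := by
  by_contra hc
  refine ha0 ?_
  have hder : ∀ᶠ z in 𝓝 x, fderiv ℂ b z = c • fderiv ℂ a z := by
    filter_upwards [hba.eventuallyEq_nhds] with z hz
    rw [hz.fderiv_eq, show (fun z => c * a z) = c • a from rfl, fderiv_const_smul_field]
    rfl
  filter_upwards [hVa, hVb, hder, hba] with z ha hb hd hz
  have hcomb : c * (α - β) * a z = 0 := by
    simp only [lieDeriv, hd, smul_apply, smul_eq_mul] at ha hb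
    linear_combination hb - c * ha + β * hz
  exact (mul_eq_zero.mp hcomb).resolve_left (mul_ne_zero hc (sub_ne_zero.mpr hαβ))

theorem eventually_mul_lieDeriv_comm {a b t : E → ℂ}
    (hVa : ∀ᶠ z in 𝓝 x, lieDeriv V a z = t z * a z)
    (hVb : ∀ᶠ z in 𝓝 x, lieDeriv V b z = t z * b z) :
    ∀ᶠ z in 𝓝 x, a z * lieDeriv V b z = b z * lieDeriv V a z := by
  filter_upwards [hVa, hVb] with z ha hb
  rw [ha, hb]
  ring

theorem exists_nonconstant_first_integral {W : E → E} {h f e t : E → ℂ} {κ α β γ : ℂ}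
    (hh : AnalyticAt ℂ h x) (hf : AnalyticAt ℂ f x) (he : AnalyticAt ℂ e x)
    (hVh : ∀ᶠ z in 𝓝 x, lieDeriv V h z = t z * h z)
    (hVf : ∀ᶠ z in 𝓝 x, lieDeriv V f z = t z * f z)
    (hVe : ∀ᶠ z in 𝓝 x, lieDeriv V e z = t z * e z - κ * f z)
    (hWh : ∀ᶠ z in 𝓝 x, lieDeriv W h z = α * h z)
    (hWf : ∀ᶠ z in 𝓝 x, lieDeriv W f z = β * f z)
    (hWe : ∀ᶠ z in 𝓝 x, lieDeriv W e z = γ * e z)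
    (hαβ : α ≠ β) (hαγ : α ≠ γ) (hh0 : ¬ (h =ᶠ[𝓝 x] fun _ => 0))
    (hfe : ¬ ((f =ᶠ[𝓝 x] fun _ => 0) ∧ (e =ᶠ[𝓝 x] fun _ => 0))) :
    ∃ g h' : E → ℂ, AnalyticAt ℂ g x ∧ AnalyticAt ℂ h' x ∧ ¬ (h' =ᶠ[𝓝 x] fun _ => 0) ∧
      (∀ᶠ z in 𝓝 x, h' z * lieDeriv V g z = g z * lieDeriv V h' z) ∧
      ∀ c : ℂ, ¬ (g =ᶠ[𝓝 x] fun z => c * h' z) := by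
  by_cases hfh : ∃ c : ℂ, f =ᶠ[𝓝 x] fun z => c * h z
  · obtain ⟨c, hc⟩ := hfh
    have hf0 : f =ᶠ[𝓝 x] fun _ => 0 := by
      simpa [eq_zero_of_eventuallyEq_const_mul_of_lieDeriv hWh hWf hαβ hh0 hc] using hc
    have hVe' : ∀ᶠ z in 𝓝 x, lieDeriv V e z = t z * e z := by
      filter_upwards [hVe, hf0] with z hVez hfz
      rw [hVez, hfz, mul_zero, sub_zero]
    refine ⟨e, h, he, hh, hh0, eventually_mul_lieDeriv_comm hVh hVe', fun c' hc' => hfe ⟨hf0, ?_⟩⟩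
    simpa [eq_zero_of_eventuallyEq_const_mul_of_lieDeriv hWh hWe hαγ hh0 hc'] using hc'
  · push Not at hfh
    exact ⟨f, h, hf, hh, hh0, eventually_mul_lieDeriv_comm hVh hVf, hfh⟩

end LieDeriv

section Det2

def det2 (a b : ℂ × ℂ) : ℂ := a.1 * b.2 - a.2 * b.1

def trace2 (M : ℂ × ℂ →L[ℂ] ℂ × ℂ) : ℂ := (M (1, 0)).1 + (M (0, 1)).2

theorem det2_smul_eq (a b c : ℂ × ℂ) : det2 a b • c = det2 a c • b - det2 b c • a := by
  ext <;> simp only [det2, Prod.smul_fst, Prod.smul_snd, Prod.fst_sub, Prod.snd_sub,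
    smul_eq_mul] <;> ring

theorem det2_map_add_det2_map (M : ℂ × ℂ →L[ℂ] ℂ × ℂ) (a b : ℂ × ℂ) :
    det2 (M a) b + det2 a (M b) = trace2 M * det2 a b := by
  have hM : ∀ v : ℂ × ℂ, M v = v.1 • M (1, 0) + v.2 • M (0, 1) := fun v => by
    rw [← map_smul, ← map_smul, ← map_add]
    congr 1
    ext <;> simp
  rw [hM a, hM b]
  simp only [det2, trace2, Prod.fst_add, Prod.snd_add, Prod.smul_fst, Prod.smul_snd, smul_eq_mul]
  ring

variable {A B : ℂ × ℂ → ℂ × ℂ} {z : ℂ × ℂ}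

theorem AnalyticAt.det2 (hA : AnalyticAt ℂ A z) (hB : AnalyticAt ℂ B z) :
    AnalyticAt ℂ (fun w => _root_.det2 (A w) (B w)) z :=
  ((analyticAt_fst.comp hA).mul (analyticAt_snd.comp hB)).sub
    ((analyticAt_snd.comp hA).mul (analyticAt_fst.comp hB))

theorem fderiv_det2_apply (hA : DifferentiableAt ℂ A z) (hB : DifferentiableAt ℂ B z)
    (v : ℂ × ℂ) :
    fderiv ℂ (fun w => det2 (A w) (B w)) z v
      = det2 (fderiv ℂ A z v) (B z) + det2 (A z) (fderiv ℂ B z v) := by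
  have hA' := hA.hasFDerivAt
  have hB' := hB.hasFDerivAt
  have hdet : HasFDerivAt (fun w => det2 (A w) (B w)) _ z :=
    (hA'.fst.mul hB'.snd).sub (hA'.snd.mul hB'.fst)
  rw [hdet.fderiv]
  simp only [det2, sub_apply, add_apply, smul_apply, ContinuousLinearMap.comp_apply, smul_eq_mul,
    ContinuousLinearMap.coe_fst', ContinuousLinearMap.coe_snd']
  ring

theorem lieDeriv_det2 (hA : DifferentiableAt ℂ A z) (hB : DifferentiableAt ℂ B z)
    (V : ℂ × ℂ → ℂ × ℂ) :
    lieDeriv V (fun w => det2 (A w) (B w)) z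
      = det2 (lieBr V A z) (B z) + det2 (A z) (lieBr V B z)
        + trace2 (fderiv ℂ V z) * det2 (A z) (B z) := by
  rw [lieDeriv, fderiv_det2_apply hA hB, ← det2_map_add_det2_map]
  simp only [lieBr, det2, Prod.fst_sub, Prod.snd_sub]
  ring

theorem lieDeriv_det2_of_lieBr_eq_zero (hA : DifferentiableAt ℂ A z)
    (hB : DifferentiableAt ℂ B z) (hAB : lieBr A B z = 0) :
    lieDeriv A (fun w => det2 (A w) (B w)) z = trace2 (fderiv ℂ A z) * det2 (A z) (B z) := by
  rw [lieDeriv_det2 hA hB, lieBr_self, hAB]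
  simp [det2]

theorem eventuallyEq_zero_of_det2_eventuallyEq_zero {C : ℂ × ℂ → ℂ × ℂ}
    (hA : AnalyticAt ℂ A z) (hB : AnalyticAt ℂ B z) (hC : AnalyticAt ℂ C z)
    (hAB : ¬ ((fun w => det2 (A w) (B w)) =ᶠ[𝓝 z] fun _ => 0))
    (hBC : (fun w => det2 (B w) (C w)) =ᶠ[𝓝 z] fun _ => 0)
    (hAC : (fun w => det2 (A w) (C w)) =ᶠ[𝓝 z] fun _ => 0) :
    C =ᶠ[𝓝 z] fun _ => 0 := by
  have hABC : ∀ᶠ w in 𝓝 z, det2 (A w) (B w) • C w = 0 := by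
    filter_upwards [hBC, hAC] with w hBCw hACw
    rw [det2_smul_eq, hBCw, hACw, zero_smul, zero_smul, sub_zero]
  have hC₁ := (hA.det2 hB).eventuallyEq_zero_of_mul_eventuallyEq_zero
    (analyticAt_fst.comp hC) (hABC.mono fun w hw => congrArg Prod.fst hw) hAB
  have hC₂ := (hA.det2 hB).eventuallyEq_zero_of_mul_eventuallyEq_zero
    (analyticAt_snd.comp hC) (hABC.mono fun w hw => congrArg Prod.snd hw) hAB
  filter_upwards [hC₁, hC₂] with w hw₁ hw₂ using Prod.ext hw₁ hw₂

end Det2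

section QuasiHomogeneous

variable {p q : ℕ} {A B X : ℂ × ℂ → ℂ × ℂ} {z : ℂ × ℂ}

theorem hasFDerivAt_Svf (p q : ℕ) (z : ℂ × ℂ) :
    HasFDerivAt (Svf p q)
      (((p : ℂ) • ContinuousLinearMap.fst ℂ ℂ ℂ).prod ((q : ℂ) • ContinuousLinearMap.snd ℂ ℂ ℂ)) z :=
  (hasFDerivAt_fst.const_mul _).prodMk (hasFDerivAt_snd.const_mul _)

theorem analyticAt_Svf (p q : ℕ) (z : ℂ × ℂ) : AnalyticAt ℂ (Svf p q) z :=
  (analyticAt_const.mul analyticAt_fst).prod (analyticAt_const.mul analyticAt_snd)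

theorem trace2_fderiv_Svf (p q : ℕ) (z : ℂ × ℂ) : trace2 (fderiv ℂ (Svf p q) z) = p + q := by
  simp [(hasFDerivAt_Svf p q z).fderiv, trace2]

theorem lieDeriv_Svf_det2 {α β : ℂ} (hA : DifferentiableAt ℂ A z) (hB : DifferentiableAt ℂ B z)
    (hSA : lieBr (Svf p q) A z = α • A z) (hSB : lieBr (Svf p q) B z = β • B z) :
    lieDeriv (Svf p q) (fun w => det2 (A w) (B w)) z = (α + β + p + q) * det2 (A z) (B z) := by
  rw [lieDeriv_det2 hA hB, hSA, hSB, trace2_fderiv_Svf]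
  simp only [det2, Prod.smul_fst, Prod.smul_snd, smul_eq_mul]
  ring

theorem lieDeriv_Svf_det2_Svf {β : ℂ} (hB : DifferentiableAt ℂ B z)
    (hSB : lieBr (Svf p q) B z = β • B z) :
    lieDeriv (Svf p q) (fun w => det2 (Svf p q w) (B w)) z
      = (β + p + q) * det2 (Svf p q z) (B z) := by
  rw [lieDeriv_Svf_det2 (hasFDerivAt_Svf p q z).differentiableAt hB (α := 0)
    (by rw [lieBr_self, zero_smul]) hSB, zero_add]

theorem lieDeriv_det2_Svf {k : ℂ} (hA : DifferentiableAt ℂ A z)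
    (hSX : lieBr (Svf p q) X z = k • X z) :
    lieDeriv X (fun w => det2 (Svf p q w) (A w)) z
      = trace2 (fderiv ℂ X z) * det2 (Svf p q z) (A z) + det2 (Svf p q z) (lieBr X A z)
        - k * det2 (X z) (A z) := by
  have hXS : lieBr X (Svf p q) z = -(k • X z) := by
    rw [← hSX]
    simp only [lieBr, neg_sub]
  rw [lieDeriv_det2 (hasFDerivAt_Svf p q z).differentiableAt hA, hXS]
  simp only [det2, Prod.fst_neg, Prod.snd_neg, Prod.smul_fst, Prod.smul_snd, smul_eq_mul]
  ring

theorem lieDeriv_det2_Svf_self {k : ℂ} (hX : DifferentiableAt ℂ X z)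
    (hSX : lieBr (Svf p q) X z = k • X z) :
    lieDeriv X (fun w => det2 (Svf p q w) (X w)) z
      = trace2 (fderiv ℂ X z) * det2 (Svf p q z) (X z) := by
  rw [lieDeriv_det2_Svf hX hSX, lieBr_self]
  simp only [det2, Prod.fst_zero, Prod.snd_zero]
  ring

theorem lieDeriv_det2_Svf_of_lieBr_eq_zero {k : ℂ} (hA : DifferentiableAt ℂ A z)
    (hSX : lieBr (Svf p q) X z = k • X z) (hXA : lieBr X A z = 0) :
    lieDeriv X (fun w => det2 (Svf p q w) (A w)) z
      = trace2 (fderiv ℂ X z) * det2 (Svf p q z) (A z) - k * det2 (X z) (A z) := by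
  rw [lieDeriv_det2_Svf hA hSX, hXA]
  simp only [det2, Prod.fst_zero, Prod.snd_zero]
  ring

end QuasiHomogeneous

theorem stmt14_general (p q : ℕ) (k l : ℤ)
    (X Y : ℂ × ℂ → ℂ × ℂ) (hX : AnalyticAt ℂ X 0) (hY : AnalyticAt ℂ Y 0)
    (hY0 : ¬ (Y =ᶠ[𝓝 0] fun _ => 0))
    (hkX : ∀ᶠ z in 𝓝 0, lieBr (Svf p q) X z = (k : ℂ) • X z)
    (hlY : ∀ᶠ z in 𝓝 0, lieBr (Svf p q) Y z = (l : ℂ) • Y z)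
    (hcomm : Commutes X Y)
    (h : ℂ × ℂ → ℂ)
    (hdef : h = fun z => (p : ℂ) * z.1 * (X z).2 - (q : ℂ) * z.2 * (X z).1)
    (f : ℂ × ℂ → ℂ)
    (fdef : f = fun z => (X z).1 * (Y z).2 - (X z).2 * (Y z).1)
    (hh0 : ¬ (h =ᶠ[𝓝 0] fun _ => 0)) :
    -- `f/h` is a first integral of `X`
    (∀ᶠ z in 𝓝 0, h z * fderiv ℂ f z (X z) = f z * fderiv ℂ h z (X z)) ∧
    -- if `ℓ ≠ 0` and `ℓ ≠ k` then `X` has a non-constant meromorphic first integral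
    (l ≠ 0 → l ≠ k →
      ∃ g h' : ℂ × ℂ → ℂ, AnalyticAt ℂ g 0 ∧ AnalyticAt ℂ h' 0 ∧
        ¬ (h' =ᶠ[𝓝 0] fun _ => 0) ∧
        (∀ᶠ z in 𝓝 0, h' z * fderiv ℂ g z (X z) = g z * fderiv ℂ h' z (X z)) ∧
        ∀ c : ℂ, ¬ (g =ᶠ[𝓝 0] fun z => c * h' z)) := by
  change h = fun z => det2 (Svf p q z) (X z) at hdef
  change f = fun z => det2 (X z) (Y z) at fdef
  subst hdef fdef
  have hXd := hX.eventually_analyticAt.mono fun _ hz => hz.differentiableAt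
  have hYd := hY.eventually_analyticAt.mono fun _ hz => hz.differentiableAt
  have hXh := (hXd.and hkX).mono fun _ hz => lieDeriv_det2_Svf_self hz.1 hz.2
  have hXf := (hXd.and (hYd.and hcomm)).mono fun _ hz =>
    lieDeriv_det2_of_lieBr_eq_zero hz.1 hz.2.1 hz.2.2
  refine ⟨eventually_mul_lieDeriv_comm hXh hXf, fun hl0 hlk => ?_⟩
  exact exists_nonconstant_first_integral ((analyticAt_Svf p q 0).det2 hX) (hX.det2 hY)
    ((analyticAt_Svf p q 0).det2 hY) hXh hXf
    ((hYd.and (hkX.and hcomm)).mono fun _ hz =>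
      lieDeriv_det2_Svf_of_lieBr_eq_zero hz.1 hz.2.1 hz.2.2)
    ((hXd.and hkX).mono fun _ hz => lieDeriv_Svf_det2_Svf hz.1 hz.2)
    ((hXd.and (hYd.and (hkX.and hlY))).mono fun _ hz =>
      lieDeriv_Svf_det2 hz.1 hz.2.1 hz.2.2.1 hz.2.2.2)
    ((hYd.and hlY).mono fun _ hz => lieDeriv_Svf_det2_Svf hz.1 hz.2)
    (fun H => hl0 (by exact_mod_cast (by linear_combination -H : (l : ℂ) = 0)))
    (fun H => hlk (by exact_mod_cast (by linear_combination -H : (l : ℂ) = k)))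
    hh0
    fun hfe => hY0 (eventuallyEq_zero_of_det2_eventuallyEq_zero (analyticAt_Svf p q 0) hX hY
      hh0 hfe.1 hfe.2)

/-- For commuting `S` quasi-homogeneous vector fields `X ∈ E_k`, `Y ∈ E_ℓ` with
`h = p·x·X₂ - q·y·X₁ ≢ 0` and `f = X₁Y₂ - X₂Y₁`, the quotient `f/h` is a meromorphic first
integral of `X`; if `ℓ ≠ 0` and `ℓ ≠ k`, `X` admits a non-constant meromorphic first
integral. -/
theorem stmt14 (p q : ℕ) (hp : 1 ≤ p) (hq : 1 ≤ q) (k l : ℤ)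
    (X Y : ℂ × ℂ → ℂ × ℂ) (hX : AnalyticAt ℂ X 0) (hY : AnalyticAt ℂ Y 0)
    (hX0 : ¬ (X =ᶠ[𝓝 0] fun _ => 0)) (hY0 : ¬ (Y =ᶠ[𝓝 0] fun _ => 0))
    (hkX : ∀ᶠ z in 𝓝 0, lieBr (Svf p q) X z = (k : ℂ) • X z)
    (hlY : ∀ᶠ z in 𝓝 0, lieBr (Svf p q) Y z = (l : ℂ) • Y z)
    (hcomm : Commutes X Y)
    (h : ℂ × ℂ → ℂ)
    (hdef : h = fun z => (p : ℂ) * z.1 * (X z).2 - (q : ℂ) * z.2 * (X z).1)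
    (f : ℂ × ℂ → ℂ)
    (fdef : f = fun z => (X z).1 * (Y z).2 - (X z).2 * (Y z).1)
    (hh0 : ¬ (h =ᶠ[𝓝 0] fun _ => 0)) :
    -- `f/h` is a first integral of `X`
    (∀ᶠ z in 𝓝 0, h z * fderiv ℂ f z (X z) = f z * fderiv ℂ h z (X z)) ∧
    -- if `ℓ ≠ 0` and `ℓ ≠ k` then `X` has a non-constant meromorphic first integral
    (l ≠ 0 → l ≠ k →
      ∃ g h' : ℂ × ℂ → ℂ, AnalyticAt ℂ g 0 ∧ AnalyticAt ℂ h' 0 ∧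
        ¬ (h' =ᶠ[𝓝 0] fun _ => 0) ∧
        (∀ᶠ z in 𝓝 0, h' z * fderiv ℂ g z (X z) = g z * fderiv ℂ h' z (X z)) ∧
        ∀ c : ℂ, ¬ (g =ᶠ[𝓝 0] fun z => c * h' z)) :=
  stmt14_general p q k l X Y hX hY hY0 hkX hlY hcomm h hdef f fdef hh0
end
end
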